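/- For 2 ≤ p ≤ q ≤ ∞, the Banach–Mazur distance between ℓ_p^n and ℓ_q^n equals n^{1/p − 1/q}; in particular d(ℓ_p^n, ℓ_∞^n) = n^{1/p} for p ∈ [2,∞]. -/

import Mathlib

open scoped ENNReal

/-- The multiplicative Banach–Mazur distance between two normed spaces:
`inf {‖T‖·‖T⁻¹‖ : T an isomorphism from X onto Y}`. -/
noncomputable def dBM (X Y : Type*) [NormedAddCommGroup X] [NormedSpace ℝ X]
    [NormedAddCommGroup Y] [NormedSpace ℝ Y] : ℝ :=
  sInf {c : ℝ | ∃ T : X ≃L[ℝ] Y, c = ‖(T : X →L[ℝ] Y)‖ * ‖(T.symm : Y →L[ℝ] X)‖}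

/-! The identity `ℓ_p^n → ℓ_q^n` has norm `1` and its inverse has norm at most `n^{1/p - 1/q}`
(power-mean inequality), which gives the upper bound. For the lower bound, `p ≥ 2` yields the
Clarkson-type inequality `‖u‖^p + ‖v‖^p ≤ (‖u + v‖^p + ‖u - v‖^p) / 2` in `ℓ_p`, so for any vectors
`y₁, …, yₙ` there are signs `εᵢ = ±1` with `∑ ‖yᵢ‖^p ≤ ‖∑ εᵢ yᵢ‖^p`. For an isomorphism `T` and
`yᵢ = T⁻¹ eᵢ` this gives `n ≤ ‖T‖^p ∑ ‖yᵢ‖^p ≤ (‖T‖ ‖T⁻¹‖ ‖ε‖_q)^p = (‖T‖ ‖T⁻¹‖)^p n^{p/q}`. -/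

open Finset WithLp

-- Also valid for `q = ∞`, since then `q.toReal⁻¹ = 0⁻¹ = 0`.
theorem ENNReal.toReal_one_div_sub_one_div {p q : ℝ≥0∞} (hp : p ≠ 0) (hpq : p ≤ q) :
    (1 / p - 1 / q).toReal = p.toReal⁻¹ - q.toReal⁻¹ := by
  rw [ENNReal.toReal_sub_of_le (ENNReal.div_le_div_left hpq 1) (by simpa using hp)]
  simp

namespace PiLp

variable {ι : Type*} [Fintype ι] {β : ι → Type*} [∀ i, SeminormedAddCommGroup (β i)]
  {p q : ℝ≥0∞}

theorem norm_rpow_eq_sum (hp : 0 < p.toReal) (f : PiLp p β) :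
    ‖f‖ ^ p.toReal = ∑ i, ‖f i‖ ^ p.toReal := by
  rw [norm_eq_sum hp, ← Real.rpow_mul (by positivity), one_div_mul_cancel hp.ne', Real.rpow_one]

variable [Fact (1 ≤ p)] [Fact (1 ≤ q)]

theorem norm_toLp_le_norm_toLp_of_le (hpq : p ≤ q) (x : ∀ i, β i) :
    ‖toLp q x‖ ≤ ‖toLp p x‖ := by
  set N := ‖toLp p x‖
  have hx (i : ι) : ‖x i‖ ≤ N := norm_apply_le (toLp p x) i
  rcases eq_top_or_lt_top q with rfl | hq
  · rw [norm_eq_ciSup]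
    exact Real.iSup_le hx (norm_nonneg _)
  have hp0 : 0 < p.toReal := ENNReal.toReal_pos (zero_lt_one.trans_le Fact.out).ne'
    (hpq.trans_lt hq).ne
  have hq0 : 0 < q.toReal := hp0.trans_le (ENNReal.toReal_mono hq.ne hpq)
  have hqp : q.toReal - p.toReal + p.toReal ≠ 0 := by linarith
  have hpow : ‖toLp q x‖ ^ q.toReal ≤ N ^ q.toReal := calc
    ‖toLp q x‖ ^ q.toReal = ∑ i, ‖x i‖ ^ (q.toReal - p.toReal) * ‖x i‖ ^ p.toReal := by
      rw [norm_rpow_eq_sum hq0]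
      refine sum_congr rfl fun i _ => ?_
      rw [← Real.rpow_add' (norm_nonneg _) hqp, sub_add_cancel]
    _ ≤ ∑ i, N ^ (q.toReal - p.toReal) * ‖x i‖ ^ p.toReal := by
      gcongr with i
      · exact sub_nonneg.2 (ENNReal.toReal_mono hq.ne hpq)
      · exact hx i
    _ = N ^ q.toReal := by
      rw [← mul_sum, ← norm_rpow_eq_sum hp0, ← Real.rpow_add' (norm_nonneg _) hqp, sub_add_cancel]
  exact (Real.rpow_le_rpow_iff (norm_nonneg _) (norm_nonneg _) hq0).1 hpow

theorem norm_toLp_le_card_rpow_mul_norm_toLp (hpq : p ≤ q) (x : ∀ i, β i) :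
    ‖toLp p x‖ ≤ (Fintype.card ι : ℝ) ^ (1 / p - 1 / q).toReal * ‖toLp q x‖ := by
  rcases eq_top_or_lt_top p with rfl | hp
  · obtain rfl : q = ∞ := top_le_iff.1 hpq
    simp
  set n : ℝ := (Fintype.card ι : ℝ)
  have hp0 : 0 < p.toReal := ENNReal.toReal_pos (zero_lt_one.trans_le Fact.out).ne' hp.ne
  rw [ENNReal.toReal_one_div_sub_one_div (ENNReal.toReal_pos_iff.1 hp0).1.ne' hpq]
  rcases eq_top_or_lt_top q with rfl | hq
  · set M := ‖toLp ∞ x‖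
    have hpow : ‖toLp p x‖ ^ p.toReal ≤ (n ^ p.toReal⁻¹ * M) ^ p.toReal := calc
      ‖toLp p x‖ ^ p.toReal = ∑ i, ‖x i‖ ^ p.toReal := norm_rpow_eq_sum hp0 _
      _ ≤ ∑ _i : ι, M ^ p.toReal := by
        gcongr with i
        exact norm_apply_le (toLp ∞ x) i
      _ = (n ^ p.toReal⁻¹ * M) ^ p.toReal := by
        rw [sum_const, card_univ, nsmul_eq_mul, Real.mul_rpow (by positivity) (norm_nonneg _),
          Real.rpow_inv_rpow (by positivity) hp0.ne']
    rw [ENNReal.toReal_top, inv_zero, sub_zero]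
    exact (Real.rpow_le_rpow_iff (norm_nonneg _) (by positivity) hp0).1 hpow
  have hq0 : 0 < q.toReal := hp0.trans_le (ENNReal.toReal_mono hq.ne hpq)
  have hqp : 1 ≤ q.toReal / p.toReal := (one_le_div hp0).2 (ENNReal.toReal_mono hq.ne hpq)
  have hpow : ‖toLp p x‖ ^ q.toReal
      ≤ (n ^ (p.toReal⁻¹ - q.toReal⁻¹) * ‖toLp q x‖) ^ q.toReal := calc
    ‖toLp p x‖ ^ q.toReal = (∑ i, ‖x i‖ ^ p.toReal) ^ (q.toReal / p.toReal) := by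
      rw [← norm_rpow_eq_sum hp0, ← Real.rpow_mul (norm_nonneg _), mul_div_cancel₀ _ hp0.ne']
    _ ≤ n ^ (q.toReal / p.toReal - 1) * ∑ i, (‖x i‖ ^ p.toReal) ^ (q.toReal / p.toReal) := by
      simpa using Real.rpow_sum_le_const_mul_sum_rpow_of_nonneg univ hqp
        (f := fun i => ‖x i‖ ^ p.toReal) fun i _ => by positivity
    _ = n ^ (q.toReal / p.toReal - 1) * ‖toLp q x‖ ^ q.toReal := by
      simp_rw [← Real.rpow_mul (norm_nonneg _), mul_div_cancel₀ _ hp0.ne']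
      rw [norm_rpow_eq_sum hq0]
    _ = (n ^ (p.toReal⁻¹ - q.toReal⁻¹) * ‖toLp q x‖) ^ q.toReal := by
      rw [Real.mul_rpow (by positivity) (norm_nonneg _), ← Real.rpow_mul (by positivity)]
      congr 2
      field_simp
  exact (Real.rpow_le_rpow_iff (norm_nonneg _) (by positivity) hq0).1 hpow

theorem norm_toLp_of_forall_norm_eq_one [Nonempty ι] {x : ∀ i, β i} (hx : ∀ i, ‖x i‖ = 1) :
    ‖toLp q x‖ = (Fintype.card ι : ℝ) ^ q.toReal⁻¹ := by
  rcases eq_top_or_lt_top q with rfl | hq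
  · simp [norm_eq_ciSup, hx]
  have hq0 : 0 < q.toReal := ENNReal.toReal_pos (zero_lt_one.trans_le Fact.out).ne' hq.ne
  simp [norm_eq_sum hq0, hx]

end PiLp

theorem norm_rpow_add_norm_rpow_le {E : Type*} [NormedAddCommGroup E] [InnerProductSpace ℝ E]
    {r : ℝ} (hr : 2 ≤ r) (a b : E) :
    ‖a‖ ^ r + ‖b‖ ^ r ≤ (‖a + b‖ ^ r + ‖a - b‖ ^ r) / 2 := by
  have hr2 : 1 ≤ r / 2 := by linarith
  have hsq (x : E) : ‖x‖ ^ r = (‖x‖ ^ 2) ^ (r / 2) := by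
    rw [← Real.rpow_natCast, ← Real.rpow_mul (norm_nonneg x), Nat.cast_ofNat,
      mul_div_cancel₀ _ two_ne_zero]
  have hpar := parallelogram_law_with_norm ℝ a b
  calc ‖a‖ ^ r + ‖b‖ ^ r = (‖a‖ ^ 2) ^ (r / 2) + (‖b‖ ^ 2) ^ (r / 2) := by rw [hsq, hsq]
    _ ≤ (‖a‖ ^ 2 + ‖b‖ ^ 2) ^ (r / 2) :=
      Real.add_rpow_le_rpow_add (by positivity) (by positivity) hr2
    _ = ((1 / 2 : ℝ) • ‖a + b‖ ^ 2 + (1 / 2 : ℝ) • ‖a - b‖ ^ 2) ^ (r / 2) := by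
      rw [smul_eq_mul, smul_eq_mul]
      congr 1
      linarith
    _ ≤ (1 / 2 : ℝ) • (‖a + b‖ ^ 2) ^ (r / 2) + (1 / 2 : ℝ) • (‖a - b‖ ^ 2) ^ (r / 2) :=
      (convexOn_rpow hr2).2 (Set.mem_Ici.2 (by positivity)) (Set.mem_Ici.2 (by positivity))
        (by norm_num) (by norm_num) (by norm_num)
    _ = (‖a + b‖ ^ r + ‖a - b‖ ^ r) / 2 := by
      rw [hsq (a + b), hsq (a - b), smul_eq_mul, smul_eq_mul]
      ring

theorem PiLp.norm_rpow_add_norm_rpow_le {ι : Type*} [Fintype ι] {β : ι → Type*}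
    [∀ i, NormedAddCommGroup (β i)] [∀ i, InnerProductSpace ℝ (β i)] {p : ℝ≥0∞}
    (hp : 2 ≤ p.toReal) (u v : PiLp p β) :
    ‖u‖ ^ p.toReal + ‖v‖ ^ p.toReal ≤ (‖u + v‖ ^ p.toReal + ‖u - v‖ ^ p.toReal) / 2 := by
  have hp0 : 0 < p.toReal := by linarith
  simp only [norm_rpow_eq_sum hp0, ← sum_add_distrib, sum_div]
  exact sum_le_sum fun i _ => _root_.norm_rpow_add_norm_rpow_le hp (u i) (v i)

theorem exists_abs_eq_one_sum_le_sum_smul {V ι : Type*} [AddCommGroup V] [Module ℝ V]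
    (f : V → ℝ) (hf₀ : 0 ≤ f 0) (hf : ∀ u v, f u + f v ≤ (f (u + v) + f (u - v)) / 2)
    (s : Finset ι) (y : ι → V) :
    ∃ ε : ι → ℝ, (∀ i, |ε i| = 1) ∧ ∑ i ∈ s, f (y i) ≤ f (∑ i ∈ s, ε i • y i) := by
  classical
  induction s using Finset.cons_induction with
  | empty => exact ⟨1, fun _ => abs_one, by simpa using hf₀⟩
  | cons a s ha ih =>
    obtain ⟨ε, hε, hs⟩ := ih
    set S := ∑ i ∈ s, ε i • y i
    obtain ⟨σ, hσ, hσS⟩ : ∃ σ : ℝ, |σ| = 1 ∧ f S + f (y a) ≤ f (σ • y a + S) := by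
      rcases le_total (f (S - y a)) (f (S + y a)) with h | h
      · exact ⟨1, abs_one, by rw [one_smul, add_comm (y a)]; linarith [hf S (y a)]⟩
      · exact ⟨-1, by simp, by rw [neg_one_smul, neg_add_eq_sub]; linarith [hf S (y a)]⟩
    refine ⟨Function.update ε a σ, fun i => ?_, ?_⟩
    · rcases eq_or_ne i a with rfl | hi
      · simpa using hσ
      · simpa [hi] using hε i
    · have hS : ∑ i ∈ s, Function.update ε a σ i • y i = S :=
        sum_congr rfl fun i hi => by rw [Function.update_of_ne (ne_of_mem_of_not_mem hi ha)]
      rw [sum_cons, sum_cons, hS, Function.update_self]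
      linarith

section BanachMazur

variable {X Y : Type*} [NormedAddCommGroup X] [NormedSpace ℝ X] [NormedAddCommGroup Y]
  [NormedSpace ℝ Y]

theorem dBM_le (T : X ≃L[ℝ] Y) : dBM X Y ≤ ‖(T : X →L[ℝ] Y)‖ * ‖(T.symm : Y →L[ℝ] X)‖ :=
  csInf_le ⟨0, by rintro c ⟨T, rfl⟩; positivity⟩ ⟨T, rfl⟩

theorem le_dBM (hXY : Nonempty (X ≃L[ℝ] Y)) {c : ℝ}
    (h : ∀ T : X ≃L[ℝ] Y, c ≤ ‖(T : X →L[ℝ] Y)‖ * ‖(T.symm : Y →L[ℝ] X)‖) : c ≤ dBM X Y :=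
  let ⟨T₀⟩ := hXY
  le_csInf ⟨_, T₀, rfl⟩ (by rintro _ ⟨T, rfl⟩; exact h T)

end BanachMazur

namespace PiLp

noncomputable def exponentEquiv (p q : ℝ≥0∞) [Fact (1 ≤ p)] [Fact (1 ≤ q)] (ι : Type*)
    [Fintype ι] : PiLp p (fun _ : ι => ℝ) ≃L[ℝ] PiLp q (fun _ : ι => ℝ) :=
  (continuousLinearEquiv p ℝ _).trans (continuousLinearEquiv q ℝ _).symm

variable {ι : Type*} [Fintype ι] {p q : ℝ≥0∞} [Fact (1 ≤ p)] [Fact (1 ≤ q)]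

theorem dBM_le_card_rpow (hpq : p ≤ q) :
    dBM (PiLp p fun _ : ι => ℝ) (PiLp q fun _ : ι => ℝ)
      ≤ (Fintype.card ι : ℝ) ^ (1 / p - 1 / q).toReal := by
  let T := exponentEquiv p q ι
  have hT : ‖(T : PiLp p (fun _ : ι => ℝ) →L[ℝ] PiLp q fun _ : ι => ℝ)‖ ≤ 1 :=
    ContinuousLinearMap.opNorm_le_bound _ zero_le_one fun x =>
      (one_mul ‖x‖).symm ▸ norm_toLp_le_norm_toLp_of_le hpq (ofLp x)
  have hTsymm : ‖(T.symm : PiLp q (fun _ : ι => ℝ) →L[ℝ] PiLp p fun _ : ι => ℝ)‖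
      ≤ (Fintype.card ι : ℝ) ^ (1 / p - 1 / q).toReal :=
    ContinuousLinearMap.opNorm_le_bound _ (by positivity) fun y =>
      norm_toLp_le_card_rpow_mul_norm_toLp hpq (ofLp y)
  calc dBM _ _ ≤ _ := dBM_le T
    _ ≤ 1 * (Fintype.card ι : ℝ) ^ (1 / p - 1 / q).toReal :=
      mul_le_mul hT hTsymm (norm_nonneg _) zero_le_one
    _ = _ := one_mul _

theorem card_rpow_le_norm_mul_norm_symm [Nonempty ι] (hp : 2 ≤ p) (hpq : p ≤ q)
    (T : PiLp p (fun _ : ι => ℝ) ≃L[ℝ] PiLp q fun _ : ι => ℝ) :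
    (Fintype.card ι : ℝ) ^ (1 / p - 1 / q).toReal
      ≤ ‖(T : PiLp p (fun _ : ι => ℝ) →L[ℝ] PiLp q fun _ : ι => ℝ)‖
        * ‖(T.symm : PiLp q (fun _ : ι => ℝ) →L[ℝ] PiLp p fun _ : ι => ℝ)‖ := by
  rcases eq_top_or_lt_top p with rfl | hp_top
  · obtain rfl : q = ∞ := top_le_iff.1 hpq
    simpa using T.one_le_norm_mul_norm_symm
  set n : ℝ := (Fintype.card ι : ℝ)
  set r := p.toReal
  set A := ‖(T : PiLp p (fun _ : ι => ℝ) →L[ℝ] PiLp q fun _ : ι => ℝ)‖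
  set B := ‖(T.symm : PiLp q (fun _ : ι => ℝ) →L[ℝ] PiLp p fun _ : ι => ℝ)‖
  have hr : 2 ≤ r := by simpa using ENNReal.toReal_mono hp_top.ne hp
  have hn : 0 < n := by positivity
  set e := basisFun q ℝ ι
  obtain ⟨ε, hε, hsigns⟩ := exists_abs_eq_one_sum_le_sum_smul (fun u => ‖u‖ ^ r)
    (by simp [Real.zero_rpow (by positivity : r ≠ 0)]) (norm_rpow_add_norm_rpow_le hr) univ
    (fun i => T.symm (e i))
  have hsum : ∑ i, ε i • T.symm (e i) = T.symm (toLp q ε) := by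
    conv_rhs => rw [← e.sum_repr (toLp q ε)]
    simp [e]
  have hA (i : ι) : 1 ≤ A * ‖T.symm (e i)‖ := by
    have h := T.toContinuousLinearMap.le_opNorm (T.symm (e i))
    classical simpa [e, basisFun_apply] using h
  have hB : ‖T.symm (toLp q ε)‖ ≤ B * n ^ q.toReal⁻¹ := calc
    ‖T.symm (toLp q ε)‖ ≤ B * ‖toLp q ε‖ := T.symm.toContinuousLinearMap.le_opNorm _
    _ = B * n ^ q.toReal⁻¹ := by rw [norm_toLp_of_forall_norm_eq_one hε]
  have hpow : n ≤ (A * B * n ^ q.toReal⁻¹) ^ r := calc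
    n = ∑ _i : ι, (1 : ℝ) := by rw [sum_const, card_univ, nsmul_one]
    _ ≤ ∑ i, (A * ‖T.symm (e i)‖) ^ r := by
      gcongr with i
      exact Real.one_le_rpow (hA i) (by positivity)
    _ = A ^ r * ∑ i, ‖T.symm (e i)‖ ^ r := by
      rw [mul_sum]
      exact sum_congr rfl fun i _ => Real.mul_rpow (norm_nonneg _) (norm_nonneg _)
    _ ≤ A ^ r * ‖T.symm (toLp q ε)‖ ^ r := by
      gcongr
      simpa [hsum] using hsigns
    _ ≤ A ^ r * (B * n ^ q.toReal⁻¹) ^ r := by gcongr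
    _ = (A * B * n ^ q.toReal⁻¹) ^ r := by
      rw [mul_assoc, ← Real.mul_rpow (norm_nonneg _) (by positivity)]
  rw [ENNReal.toReal_one_div_sub_one_div (by positivity) hpq, Real.rpow_sub hn,
    div_le_iff₀ (by positivity)]
  calc n ^ r⁻¹ ≤ ((A * B * n ^ q.toReal⁻¹) ^ r) ^ r⁻¹ := by gcongr
    _ = A * B * n ^ q.toReal⁻¹ := Real.rpow_rpow_inv (by positivity) (by positivity)

theorem dBM_eq_card_rpow [Nonempty ι] (hp : 2 ≤ p) (hpq : p ≤ q) :
    dBM (PiLp p fun _ : ι => ℝ) (PiLp q fun _ : ι => ℝ)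
      = (Fintype.card ι : ℝ) ^ (1 / p - 1 / q).toReal :=
  (dBM_le_card_rpow hpq).antisymm <|
    le_dBM ⟨exponentEquiv p q ι⟩ (card_rpow_le_norm_mul_norm_symm hp hpq)

end PiLp

theorem bm_lpn_lqn_eq (n : ℕ) (hn : 0 < n) (p q : ℝ≥0∞)
    [Fact (1 ≤ p)] [Fact (1 ≤ q)] (hp : 2 ≤ p) (hpq : p ≤ q) :
    dBM (PiLp p fun _ : Fin n => ℝ) (PiLp q fun _ : Fin n => ℝ)
      = (n : ℝ) ^ ((1 / p - 1 / q : ℝ≥0∞).toReal) ∧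
    dBM (PiLp p fun _ : Fin n => ℝ) (PiLp ∞ fun _ : Fin n => ℝ)
      = (n : ℝ) ^ ((1 / p : ℝ≥0∞).toReal) := by
  have : Nonempty (Fin n) := Fin.pos_iff_nonempty.1 hn
  constructor
  · simpa using PiLp.dBM_eq_card_rpow (ι := Fin n) hp hpq
  · simpa using PiLp.dBM_eq_card_rpow (ι := Fin n) (q := ∞) hp le_top
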